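/- Let T be a bounded linear operator on a complex Banach space X, let M be a closed T-invariant subspace, and set T₁ = T|_M. If λ ∈ ℂ and p ≥ 1 is an integer such that H_0(T−λ) = ker(T−λ)^p, then H_0(T₁−λ) = ker(T₁−λ)^p; in particular asc(T₁−λ) ≤ p. -/

import Mathlib

open Metric Filter NormedSpace
open scoped Classical ENNReal

variable {X : Type*} [NormedAddCommGroup X] [NormedSpace ℂ X]

/-- The ascent of an operator `T`: the least `n ≥ 0` with `ker Tⁿ = ker Tⁿ⁺¹`,
and `⊤` if no such `n` exists. -/
noncomputable def ascent (T : X →L[ℂ] X) : ℕ∞ :=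
  if ∃ n : ℕ, LinearMap.ker ((T ^ n : X →L[ℂ] X) : X →ₗ[ℂ] X) = LinearMap.ker ((T ^ (n + 1) : X →L[ℂ] X) : X →ₗ[ℂ] X) then
    ((sInf {n : ℕ | LinearMap.ker ((T ^ n : X →L[ℂ] X) : X →ₗ[ℂ] X) = LinearMap.ker ((T ^ (n + 1) : X →L[ℂ] X) : X →ₗ[ℂ] X)} : ℕ) : ℕ∞)
  else ⊤

/-- The descent of an operator `T`: the least `n ≥ 0` with `ran Tⁿ = ran Tⁿ⁺¹`,
and `⊤` if no such `n` exists. -/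
noncomputable def descent (T : X →L[ℂ] X) : ℕ∞ :=
  if ∃ n : ℕ, LinearMap.range ((T ^ n : X →L[ℂ] X) : X →ₗ[ℂ] X) = LinearMap.range ((T ^ (n + 1) : X →L[ℂ] X) : X →ₗ[ℂ] X) then
    ((sInf {n : ℕ | LinearMap.range ((T ^ n : X →L[ℂ] X) : X →ₗ[ℂ] X) = LinearMap.range ((T ^ (n + 1) : X →L[ℂ] X) : X →ₗ[ℂ] X)} : ℕ) : ℕ∞)
  else ⊤

/-- `lam` is an isolated point of the set `s ⊆ ℂ`. -/
def IsIsolatedPointOf (lam : ℂ) (s : Set ℂ) : Prop :=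
  lam ∈ s ∧ ∃ U ∈ nhds lam, U ∩ s = {lam}

/-- `lam` is a pole of (the resolvent of) `T`: an isolated point of the spectrum with
`asc(T - lam) = dsc(T - lam) < ∞`. -/
def IsPoleOf (T : X →L[ℂ] X) (lam : ℂ) : Prop :=
  IsIsolatedPointOf lam (spectrum ℂ T) ∧
    ascent (T - lam • 1) = descent (T - lam • 1) ∧ ascent (T - lam • 1) ≠ ⊤

/-- `T` is polaroid: every isolated point of the spectrum is a pole. -/
def Polaroid (T : X →L[ℂ] X) : Prop :=
  ∀ lam : ℂ, IsIsolatedPointOf lam (spectrum ℂ T) → IsPoleOf T lam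

/-- The restriction of `T` to an invariant subspace `M`, as an operator on `M`. -/
def restrictCLM (T : X →L[ℂ] X) (M : Submodule ℂ X) (hM : ∀ x ∈ M, T x ∈ M) :
    M →L[ℂ] M :=
  { toLinearMap := (T : X →ₗ[ℂ] X).restrict hM
    cont := Continuous.subtype_mk (T.continuous.comp continuous_subtype_val) _ }

/-- `T` is hereditarily polaroid: the restriction of `T` to every closed invariant
subspace is polaroid. -/
def HereditarilyPolaroid (T : X →L[ℂ] X) : Prop :=
  ∀ (M : Submodule ℂ X), IsClosed (M : Set X) → ∀ (hM : ∀ x ∈ M, T x ∈ M),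
    Polaroid (restrictCLM T M hM)

/-- The quasinilpotent part `H₀(T) = {x : ‖Tⁿ x‖^(1/n) → 0}` of `T`. -/
def H0set (T : X →L[ℂ] X) : Set X :=
  {x : X | Tendsto (fun n : ℕ => ‖(T ^ n) x‖ ^ (1 / (n : ℝ))) atTop (nhds 0)}

/-! Restriction to `M` commutes with taking powers of `T - λ`, so for `x ∈ M` both membership in
`H₀` and in `ker (T - λ)^p` can be read off in `X`; this gives the equality. For the ascent,
`H₀(A) ⊇ ker A^(p+1)` for any operator `A`, so `H₀(A) = ker A^p` forces
`ker A^p = ker A^(p+1)`. -/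

section Ascent

variable (A : X →L[ℂ] X)

lemma ascent_le_of_ker_pow_eq_ker_pow_succ {n : ℕ}
    (hn : LinearMap.ker ((A ^ n : X →L[ℂ] X) : X →ₗ[ℂ] X) =
      LinearMap.ker ((A ^ (n + 1) : X →L[ℂ] X) : X →ₗ[ℂ] X)) :
    ascent A ≤ n := by
  rw [ascent, if_pos ⟨n, hn⟩]
  exact_mod_cast Nat.sInf_le hn

lemma ker_pow_le_ker_pow_succ (n : ℕ) :
    LinearMap.ker ((A ^ n : X →L[ℂ] X) : X →ₗ[ℂ] X) ≤
      LinearMap.ker ((A ^ (n + 1) : X →L[ℂ] X) : X →ₗ[ℂ] X) := by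
  intro x hx
  rw [LinearMap.mem_ker, ContinuousLinearMap.coe_coe] at hx ⊢
  rw [pow_succ', mul_apply_eq_comp, hx, map_zero]

lemma ker_pow_subset_H0set (n : ℕ) :
    (LinearMap.ker ((A ^ n : X →L[ℂ] X) : X →ₗ[ℂ] X) : Set X) ⊆ H0set A := by
  intro x hx
  rw [SetLike.mem_coe, LinearMap.mem_ker, ContinuousLinearMap.coe_coe] at hx
  have hzero : ∀ᶠ k : ℕ in atTop, ‖(A ^ k) x‖ ^ (1 / (k : ℝ)) = 0 := by
    filter_upwards [eventually_ge_atTop (n + 1)] with k hk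
    obtain ⟨j, rfl⟩ := Nat.exists_eq_add_of_le' (Nat.le_of_succ_le hk)
    rw [pow_add, mul_apply_eq_comp, hx, map_zero, norm_zero]
    exact Real.zero_rpow (one_div_ne_zero (by norm_cast; omega))
  exact tendsto_const_nhds.congr' (hzero.mono fun _ hk => hk.symm)

lemma ascent_le_of_H0set_eq_ker_pow {p : ℕ}
    (h : H0set A = (LinearMap.ker ((A ^ p : X →L[ℂ] X) : X →ₗ[ℂ] X) : Set X)) :
    ascent A ≤ p := by
  refine ascent_le_of_ker_pow_eq_ker_pow_succ A (le_antisymm (ker_pow_le_ker_pow_succ A p) ?_)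
  intro x hx
  have hx' : x ∈ H0set A := ker_pow_subset_H0set A (p + 1) hx
  rwa [h] at hx'

end Ascent

section Restriction

variable (T : X →L[ℂ] X) (M : Submodule ℂ X) (hMi : ∀ x ∈ M, T x ∈ M) (lam : ℂ)

lemma coe_restrictCLM_sub_smul_pow_apply (n : ℕ) (x : M) :
    ((((restrictCLM T M hMi - lam • 1) ^ n) x : M) : X) = ((T - lam • 1) ^ n) (x : X) := by
  induction n with
  | zero => rfl
  | succ n ih =>
    rw [pow_succ', pow_succ', mul_apply_eq_comp, mul_apply_eq_comp, ← ih]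
    rfl

lemma mem_H0set_restrictCLM_sub_smul_iff (x : M) :
    x ∈ H0set (restrictCLM T M hMi - lam • 1) ↔ (x : X) ∈ H0set (T - lam • 1) := by
  simp only [H0set, Set.mem_ofPred_eq, Submodule.coe_norm, coe_restrictCLM_sub_smul_pow_apply]

lemma mem_ker_restrictCLM_sub_smul_pow_iff (n : ℕ) (x : M) :
    x ∈ LinearMap.ker (((restrictCLM T M hMi - lam • 1) ^ n : M →L[ℂ] M) : M →ₗ[ℂ] M) ↔
      (x : X) ∈ LinearMap.ker (((T - lam • 1) ^ n : X →L[ℂ] X) : X →ₗ[ℂ] X) := by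
  rw [LinearMap.mem_ker, LinearMap.mem_ker, ContinuousLinearMap.coe_coe,
    ContinuousLinearMap.coe_coe, ← coe_restrictCLM_sub_smul_pow_apply, ZeroMemClass.coe_eq_zero]

end Restriction

theorem H0_eq_ker_pow_restrict_general
    {X : Type*} [NormedAddCommGroup X] [NormedSpace ℂ X]
    (T : X →L[ℂ] X) (M : Submodule ℂ X)
    (hMi : ∀ x ∈ M, T x ∈ M) (lam : ℂ) (p : ℕ)
    (h : H0set (T - lam • 1) = (LinearMap.ker (((T - lam • 1) ^ p : X →L[ℂ] X) : X →ₗ[ℂ] X) : Set X)) :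
    H0set (restrictCLM T M hMi - lam • 1) =
        (LinearMap.ker (((restrictCLM T M hMi - lam • 1) ^ p : M →L[ℂ] M) : M →ₗ[ℂ] M) : Set M) ∧
      ascent (restrictCLM T M hMi - lam • 1) ≤ (p : ℕ∞) := by
  have hrestrict : H0set (restrictCLM T M hMi - lam • 1) =
      (LinearMap.ker (((restrictCLM T M hMi - lam • 1) ^ p : M →L[ℂ] M) : M →ₗ[ℂ] M) : Set M) := by
    ext x
    rw [mem_H0set_restrictCLM_sub_smul_iff, SetLike.mem_coe,
      mem_ker_restrictCLM_sub_smul_pow_iff, h, SetLike.mem_coe]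
  exact ⟨hrestrict, ascent_le_of_H0set_eq_ker_pow _ hrestrict⟩

/-- If `H₀(T - lam) = ker (T - lam)^p` and `M` is a closed `T`-invariant subspace,
then the restriction `T₁ = T|_M` satisfies `H₀(T₁ - lam) = ker (T₁ - lam)^p`;
in particular `asc (T₁ - lam) ≤ p`. -/
theorem H0_eq_ker_pow_restrict
    {X : Type*} [NormedAddCommGroup X] [NormedSpace ℂ X] [CompleteSpace X]
    (T : X →L[ℂ] X) (M : Submodule ℂ X) (hMc : IsClosed (M : Set X))
    (hMi : ∀ x ∈ M, T x ∈ M) (lam : ℂ) (p : ℕ) (hp : 1 ≤ p)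
    (h : H0set (T - lam • 1) = (LinearMap.ker (((T - lam • 1) ^ p : X →L[ℂ] X) : X →ₗ[ℂ] X) : Set X)) :
    H0set (restrictCLM T M hMi - lam • 1) =
        (LinearMap.ker (((restrictCLM T M hMi - lam • 1) ^ p : M →L[ℂ] M) : M →ₗ[ℂ] M) : Set M) ∧
      ascent (restrictCLM T M hMi - lam • 1) ≤ (p : ℕ∞) :=
  H0_eq_ker_pow_restrict_general T M hMi lam p h
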